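/- Let τ_1 = (1,2) be the adjacent transposition swapping 1 and 2. Then T P(τ_1) Tᵗ equals the n×n identity matrix in every entry except the (n,n) entry, which equals −1; that is, T P(τ_1) Tᵗ = diag(1, 1, …, 1, −1). -/

import Mathlib

open Matrix

/-- The n×n matrix `U` from the paper: first row all ones; row `m` (1-based, m≥2)
has entries −1 in columns 1,…,n−m+1, entry n−m+1 in column n−m+2, and 0 afterwards.
Indices are 0-based here, so row `i` corresponds to `m = i+1`. -/
noncomputable def Umat (n : ℕ) : Matrix (Fin n) (Fin n) ℝ :=
  Matrix.of fun i j =>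
    if i.val = 0 then 1
    else if j.val < n - i.val then -1
    else if j.val = n - i.val then ((n : ℝ) - i.val)
    else 0

/-- The diagonal matrix `A` with `A₁₁ = 1/√n` and `A_kk = 1/√((n−k+1)(n−k+2))` for k ≥ 2
(1-based `k = i+1`). -/
noncomputable def Amat (n : ℕ) : Matrix (Fin n) (Fin n) ℝ :=
  Matrix.diagonal fun i =>
    if i.val = 0 then 1 / Real.sqrt n
    else 1 / Real.sqrt (((n : ℝ) - i.val) * ((n : ℝ) - i.val + 1))

/-- The orthogonal transform `T = A U`. -/
noncomputable def Tmat (n : ℕ) : Matrix (Fin n) (Fin n) ℝ := Amat n * Umat n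

/-- The permutation matrix `P(σ)` with `P(σ)_{i,j} = 1` iff `j = σ(i)`. -/
def Pmat (n : ℕ) (σ : Equiv.Perm (Fin n)) : Matrix (Fin n) (Fin n) ℝ :=
  Matrix.of fun i j => if j = σ i then 1 else 0

/-! The rows of `U` are the (unnormalised) Helmert rows: row 0 is all ones and row `i ≥ 1` is
`(-1, …, -1, m, 0, …, 0)` with `m = n - i` entries `-1`. These rows are pairwise orthogonal with
squared norms `n` and `m (m + 1)`, which are exactly what `A` normalises, so `T` is orthogonal.
Swapping the first two columns fixes every row except the last one, `(-1, 1, 0, …, 0)`, which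
changes sign; hence `T P(τ₁) = diag(1, …, 1, -1) T`, and multiplying by `Tᵀ = T⁻¹` gives the claim. -/

open Finset

def helmertRow (m j : ℕ) : ℝ := if j < m then -1 else if j = m then m else 0

lemma sum_range_ite_lt_ite_eq {m n : ℕ} (hm : m < n) (v c : ℝ) :
    ∑ j ∈ range n, (if j < m then v else if j = m then c else 0) = m * v + c := by
  have hsplit : ∀ j ∈ range n, (if j < m then v else if j = m then c else 0)
      = (if j < m then v else 0) + (if j = m then c else 0) := by
    intro j _
    split_ifs <;> first | omega | ring
  rw [sum_congr rfl hsplit, sum_add_distrib, sum_ite_eq' _ _ (fun _ => c), ← sum_filter,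
    show (range n).filter (· < m) = range m by ext; simp; omega]
  simp [hm, mul_comm]

lemma sum_helmertRow {m n : ℕ} (hm : m < n) : ∑ j ∈ range n, helmertRow m j = 0 := by
  simp only [helmertRow]
  rw [sum_range_ite_lt_ite_eq hm]
  ring

lemma sum_helmertRow_mul_of_lt {l m n : ℕ} (hlm : l < m) (hm : m < n) :
    ∑ j ∈ range n, helmertRow m j * helmertRow l j = 0 := by
  have hprod : ∀ j ∈ range n, helmertRow m j * helmertRow l j
      = if j < l then 1 else if j = l then -(l : ℝ) else 0 := by
    intro j _
    simp only [helmertRow]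
    split_ifs <;> first | omega | ring
  rw [sum_congr rfl hprod, sum_range_ite_lt_ite_eq (hlm.trans hm)]
  ring

lemma sum_helmertRow_mul_self {m n : ℕ} (hm : m < n) :
    ∑ j ∈ range n, helmertRow m j * helmertRow m j = m * (m + 1) := by
  have hprod : ∀ j ∈ range n, helmertRow m j * helmertRow m j
      = if j < m then 1 else if j = m then (m : ℝ) * m else 0 := by
    intro j _
    simp only [helmertRow]
    split_ifs <;> first | omega | ring
  rw [sum_congr rfl hprod, sum_range_ite_lt_ite_eq hm]
  ring

namespace Umat

variable {n : ℕ}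

lemma apply_of_val_eq_zero {i : Fin n} (hi : i.val = 0) (j : Fin n) : Umat n i j = 1 := by
  simp [Umat, hi]

lemma apply_of_val_ne_zero {i : Fin n} (hi : i.val ≠ 0) (j : Fin n) :
    Umat n i j = helmertRow (n - i) j := by
  simp [Umat, helmertRow, hi, Nat.cast_sub i.isLt.le]

lemma mul_transpose_apply_of_lt {i k : Fin n} (hik : i < k) : (Umat n * (Umat n)ᵀ) i k = 0 := by
  have hk : k.val ≠ 0 := by have : i.val < k.val := hik; omega
  have hkn : n - k < n := by omega
  simp only [mul_apply, transpose_apply, apply_of_val_ne_zero hk]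
  by_cases hi : i.val = 0
  · simp only [apply_of_val_eq_zero hi, one_mul]
    exact (Fin.sum_univ_eq_sum_range (helmertRow (n - k)) n).trans (sum_helmertRow hkn)
  · simp only [apply_of_val_ne_zero hi]
    exact (Fin.sum_univ_eq_sum_range (fun j => helmertRow (n - i) j * helmertRow (n - k) j) n).trans
      (sum_helmertRow_mul_of_lt (by omega) (by omega))

def rowNormSq (n : ℕ) (i : Fin n) : ℝ := if i.val = 0 then n else (n - i) * (n - i + 1)

lemma rowNormSq_pos (i : Fin n) : 0 < rowNormSq n i := by
  have hi : (i : ℝ) < n := by exact_mod_cast i.isLt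
  unfold rowNormSq
  split_ifs
  · linarith [(i.val.cast_nonneg : (0 : ℝ) ≤ i)]
  · nlinarith

lemma mul_transpose_apply_self (i : Fin n) : (Umat n * (Umat n)ᵀ) i i = rowNormSq n i := by
  simp only [mul_apply, transpose_apply, rowNormSq]
  by_cases hi : i.val = 0
  · simp [apply_of_val_eq_zero hi, hi]
  · simp only [apply_of_val_ne_zero hi, hi, if_false]
    rw [Fin.sum_univ_eq_sum_range (fun j => helmertRow (n - i) j * helmertRow (n - i) j) n,
      sum_helmertRow_mul_self (by omega), Nat.cast_sub i.isLt.le]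

lemma mul_transpose : Umat n * (Umat n)ᵀ = Matrix.diagonal (rowNormSq n) := by
  ext i k
  rcases lt_trichotomy i k with hik | rfl | hki
  · rw [mul_transpose_apply_of_lt hik, Matrix.diagonal_apply_ne _ hik.ne]
  · rw [mul_transpose_apply_self, Matrix.diagonal_apply_eq]
  · rw [← (Umat n * (Umat n)ᵀ).transpose_apply, Matrix.transpose_mul, Matrix.transpose_transpose,
      mul_transpose_apply_of_lt hki, Matrix.diagonal_apply_ne _ hki.ne']

end Umat

lemma Amat_eq_diagonal (n : ℕ) : Amat n = Matrix.diagonal fun i => 1 / √(Umat.rowNormSq n i) := by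
  unfold Amat Umat.rowNormSq
  congr 1
  ext i
  split_ifs <;> rfl

lemma Tmat_mul_transpose (n : ℕ) : Tmat n * (Tmat n)ᵀ = 1 := by
  rw [Tmat, Matrix.transpose_mul, Amat_eq_diagonal, Matrix.diagonal_transpose, Matrix.mul_assoc,
    ← Matrix.mul_assoc (Umat n), Umat.mul_transpose, Matrix.diagonal_mul_diagonal,
    Matrix.diagonal_mul_diagonal, ← Matrix.diagonal_one]
  congr 1
  ext i
  have hsqrt := Real.sqrt_pos.2 (Umat.rowNormSq_pos i)
  field_simp
  exact (Real.sq_sqrt (Umat.rowNormSq_pos i).le).symm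

lemma Pmat_eq_permMatrix (n : ℕ) (σ : Equiv.Perm (Fin n)) : Pmat n σ = σ.permMatrix ℝ := by
  ext i j
  simp [Pmat, Equiv.toPEquiv_apply, eq_comm]

lemma Umat_apply_swap {n : ℕ} {a b : Fin n} (ha : a.val = 0) (hb : b.val = 1) (i j : Fin n) :
    Umat n i (Equiv.swap a b j) = (if i.val = n - 1 then -1 else 1) * Umat n i j := by
  have hlast : i.val = n - 1 → (n : ℝ) - i = 1 := fun h => by
    rw [h, Nat.cast_sub (by omega), Nat.cast_one]; ring
  rcases eq_or_ne j a with rfl | hja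
  · rw [Equiv.swap_apply_left]
    simp only [Umat, Matrix.of_apply, ha, hb]
    split_ifs <;> first | omega | linarith [hlast (by omega)] | norm_num
  rcases eq_or_ne j b with rfl | hjb
  · rw [Equiv.swap_apply_right]
    simp only [Umat, Matrix.of_apply, ha, hb]
    split_ifs <;> first | omega | linarith [hlast (by omega)] | norm_num
  have hj : 2 ≤ j.val := by
    have : j.val ≠ 0 := fun h => hja (Fin.ext (h.trans ha.symm))
    have : j.val ≠ 1 := fun h => hjb (Fin.ext (h.trans hb.symm))
    omega
  rw [Equiv.swap_apply_of_ne_of_ne hja hjb]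
  simp only [Umat, Matrix.of_apply]
  split_ifs <;> first | omega | ring

lemma Tmat_mul_Pmat_swap {n : ℕ} {a b : Fin n} (ha : a.val = 0) (hb : b.val = 1) :
    Tmat n * Pmat n (Equiv.swap a b) =
      Matrix.diagonal (fun i : Fin n => if i.val = n - 1 then (-1 : ℝ) else 1) * Tmat n := by
  have hUP : Umat n * Pmat n (Equiv.swap a b) =
      Matrix.diagonal (fun i : Fin n => if i.val = n - 1 then (-1 : ℝ) else 1) * Umat n := by
    ext i j
    rw [Pmat_eq_permMatrix, PEquiv.mul_toMatrix_toPEquiv, Matrix.diagonal_mul,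
      Matrix.submatrix_apply, id, Equiv.symm_swap, Umat_apply_swap ha hb]
  rw [Tmat, Matrix.mul_assoc, hUP, ← Matrix.mul_assoc, Amat_eq_diagonal,
    (Matrix.commute_diagonal _ _).eq, Matrix.mul_assoc]

/-- For the adjacent transposition τ₁ = (1,2),
T P(τ₁) Tᵗ = diag(1, 1, …, 1, −1). -/
theorem stmt_2 (n : ℕ) (hn : 2 ≤ n) :
    Tmat n * Pmat n (Equiv.swap ⟨0, by omega⟩ ⟨1, by omega⟩) * (Tmat n)ᵀ =
      Matrix.diagonal (fun i : Fin n => if i.val = n - 1 then (-1 : ℝ) else 1) := by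
  rw [Tmat_mul_Pmat_swap rfl rfl, Matrix.mul_assoc, Tmat_mul_transpose, Matrix.mul_one]
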